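/- arXiv:1411.5995 — 2 statements merged into one kernel-verified Lean document; each statement's English description precedes it below -/
import Mathlib

section
/- Let F and B be n × n column-stochastic matrices, let 0 < α₁, α₂, α₃ < 1, and let d ∈ ℝⁿ. Then the mapping I(t) = α₁ F P₊(t) + α₂ B P₋(t) + α₃ d is a contraction on (ℝⁿ, ‖·‖₁) with Lipschitz constant at most max(α₁, α₂) < 1; that is, for all t₁, t₂ ∈ ℝⁿ, ‖I(t₁) − I(t₂)‖₁ ≤ max(α₁, α₂) ‖t₁ − t₂‖₁. -/
open Finset Filter

/-- Replace negative components by zero. -/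
def Ppos {n : ℕ} (t : Fin n → ℝ) : Fin n → ℝ := fun i => max (t i) 0

/-- Replace positive components by zero. -/
def Pneg {n : ℕ} (t : Fin n → ℝ) : Fin n → ℝ := fun i => min (t i) 0

/-- ℓ¹ norm on ℝⁿ. -/
def l1 {n : ℕ} (x : Fin n → ℝ) : ℝ := ∑ i, |x i|

/-- A matrix is column-stochastic if entries are nonnegative and each column sums to 1. -/
def ColStochastic {n : ℕ} (F : Matrix (Fin n) (Fin n) ℝ) : Prop :=
  (∀ i j, 0 ≤ F i j) ∧ ∀ j, ∑ i, F i j = 1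

/-!
Split `t` into `Ppos t + Pneg t`. Coordinatewise, `Ppos t₁ - Ppos t₂` and `Pneg t₁ - Pneg t₂` have
the same sign and add up to `t₁ - t₂`, so their ℓ¹ norms add up to `‖t₁ - t₂‖₁`. A
column-stochastic matrix does not increase the ℓ¹ norm, and the constant term `α₃ d` cancels, so
the difference of the images has norm at most `α₁ ‖Ppos t₁ - Ppos t₂‖₁ + α₂ ‖Pneg t₁ - Pneg t₂‖₁`.
-/

lemma abs_max_sub_max_add_abs_min_sub_min (a b : ℝ) :
    |max a 0 - max b 0| + |min a 0 - min b 0| = |a - b| := by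
  have hsum : (max a 0 - max b 0) + (min a 0 - min b 0) = a - b := by
    linarith [max_add_min a 0, max_add_min b 0]
  rw [← hsum, eq_comm, abs_add_eq_add_abs_iff]
  rcases le_total b a with hba | hab
  · exact .inl ⟨sub_nonneg.2 (max_le_max_right 0 hba), sub_nonneg.2 (min_le_min_right 0 hba)⟩
  · exact .inr ⟨sub_nonpos.2 (max_le_max_right 0 hab), sub_nonpos.2 (min_le_min_right 0 hab)⟩

section l1

variable {n : ℕ}

lemma l1_nonneg (x : Fin n → ℝ) : 0 ≤ l1 x :=
  sum_nonneg fun i _ => abs_nonneg (x i)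

lemma l1_add_le (x y : Fin n → ℝ) : l1 (x + y) ≤ l1 x + l1 y := by
  unfold l1
  rw [← sum_add_distrib]
  exact sum_le_sum fun i _ => abs_add_le (x i) (y i)

lemma l1_smul (c : ℝ) (x : Fin n → ℝ) : l1 (c • x) = |c| * l1 x := by
  simp only [l1, Pi.smul_apply, smul_eq_mul, abs_mul, mul_sum]

lemma l1_smul_add_smul_le {a b : ℝ} (ha : 0 ≤ a) (hb : 0 ≤ b) (x y : Fin n → ℝ) :
    l1 (a • x + b • y) ≤ max a b * (l1 x + l1 y) :=
  calc l1 (a • x + b • y) ≤ a * l1 x + b * l1 y := by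
        simpa only [l1_smul, abs_of_nonneg ha, abs_of_nonneg hb] using l1_add_le (a • x) (b • y)
    _ ≤ max a b * l1 x + max a b * l1 y := by
        gcongr
        exacts [l1_nonneg x, le_max_left a b, l1_nonneg y, le_max_right a b]
    _ = max a b * (l1 x + l1 y) := (mul_add _ _ _).symm

lemma l1_Ppos_sub_add_l1_Pneg_sub (t₁ t₂ : Fin n → ℝ) :
    l1 (Ppos t₁ - Ppos t₂) + l1 (Pneg t₁ - Pneg t₂) = l1 (t₁ - t₂) := by
  unfold l1
  rw [← sum_add_distrib]
  exact sum_congr rfl fun i _ => abs_max_sub_max_add_abs_min_sub_min (t₁ i) (t₂ i)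

lemma ColStochastic.l1_mulVec_le {F : Matrix (Fin n) (Fin n) ℝ} (hF : ColStochastic F)
    (v : Fin n → ℝ) : l1 (F.mulVec v) ≤ l1 v :=
  calc ∑ i, |∑ j, F i j * v j| ≤ ∑ i, ∑ j, F i j * |v j| := by
        gcongr with i
        refine (abs_sum_le_sum_abs _ _).trans_eq (sum_congr rfl fun j _ => ?_)
        rw [abs_mul, abs_of_nonneg (hF.1 i j)]
    _ = ∑ j, (∑ i, F i j) * |v j| := by
        rw [sum_comm]
        simp only [sum_mul]
    _ = ∑ j, |v j| := by simp only [hF.2, one_mul]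

end l1

theorem repRank_iteration_contractive_general {n : ℕ} (F B : Matrix (Fin n) (Fin n) ℝ)
    (hF : ColStochastic F) (hB : ColStochastic B)
    (α₁ α₂ α₃ : ℝ) (hα₁ : 0 < α₁) (hα₂ : 0 < α₂)
    (d : Fin n → ℝ) (t₁ t₂ : Fin n → ℝ) :
    l1 ((α₁ • F.mulVec (Ppos t₁) + α₂ • B.mulVec (Pneg t₁) + α₃ • d)
        - (α₁ • F.mulVec (Ppos t₂) + α₂ • B.mulVec (Pneg t₂) + α₃ • d))
      ≤ max α₁ α₂ * l1 (t₁ - t₂) := by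
  have hdiff : (α₁ • F.mulVec (Ppos t₁) + α₂ • B.mulVec (Pneg t₁) + α₃ • d)
        - (α₁ • F.mulVec (Ppos t₂) + α₂ • B.mulVec (Pneg t₂) + α₃ • d)
      = α₁ • F.mulVec (Ppos t₁ - Ppos t₂) + α₂ • B.mulVec (Pneg t₁ - Pneg t₂) := by
    rw [Matrix.mulVec_sub, Matrix.mulVec_sub, smul_sub, smul_sub]
    abel
  rw [hdiff, ← l1_Ppos_sub_add_l1_Pneg_sub]
  calc _ ≤ max α₁ α₂ * (l1 (F.mulVec (Ppos t₁ - Ppos t₂)) + l1 (B.mulVec (Pneg t₁ - Pneg t₂))) :=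
        l1_smul_add_smul_le hα₁.le hα₂.le _ _
    _ ≤ max α₁ α₂ * (l1 (Ppos t₁ - Ppos t₂) + l1 (Pneg t₁ - Pneg t₂)) := by
        gcongr
        · exact hF.l1_mulVec_le _
        · exact hB.l1_mulVec_le _

theorem repRank_iteration_contractive {n : ℕ} (F B : Matrix (Fin n) (Fin n) ℝ)
    (hF : ColStochastic F) (hB : ColStochastic B)
    (α₁ α₂ α₃ : ℝ) (hα₁ : 0 < α₁) (hα₁' : α₁ < 1) (hα₂ : 0 < α₂) (hα₂' : α₂ < 1)
    (hα₃ : 0 < α₃) (hα₃' : α₃ < 1) (d : Fin n → ℝ) (t₁ t₂ : Fin n → ℝ) :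
    l1 ((α₁ • F.mulVec (Ppos t₁) + α₂ • B.mulVec (Pneg t₁) + α₃ • d)
        - (α₁ • F.mulVec (Ppos t₂) + α₂ • B.mulVec (Pneg t₂) + α₃ • d))
      ≤ max α₁ α₂ * l1 (t₁ - t₂) :=
  repRank_iteration_contractive_general F B hF hB α₁ α₂ α₃ hα₁ hα₂ d t₁ t₂
end

section
/- Let F and B be n × n column-stochastic matrices, let 0 < α₁, α₂, α₃ < 1, and let t be the unique solution of the RepRank equation t = α₁ F P₊(t) + α₂ B P₋(t) + α₃ d for a given d ∈ ℝⁿ. Then for any d₁, d₂ ∈ ℝⁿ with corresponding solutions t₁ = R(d₁) and t₂ = R(d₂), one has ‖t₁ − t₂‖₁ ≤ max(α₁, α₂) ‖t₁ − t₂‖₁ + α₃ ‖d₁ − d₂‖₁. -/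
open Finset Filter

/-! The difference of two RepRank solutions is `α₁ F (P₊t₁ - P₊t₂) + α₂ B (P₋t₁ - P₋t₂)
+ α₃ (d₁ - d₂)`. Column-stochastic matrices do not increase the ℓ¹ norm, and the positive and
negative parts split `|t₁ - t₂|` componentwise: `|a⁺ - b⁺| + |a⁻ - b⁻| = |a - b|`. -/

theorem abs_max_zero_sub_add_abs_min_zero_sub {α : Type*} [AddCommGroup α] [LinearOrder α]
    [IsOrderedAddMonoid α] (a b : α) :
    |max a 0 - max b 0| + |min a 0 - min b 0| = |a - b| := by
  rcases le_total a 0 with ha | ha <;> rcases le_total b 0 with hb | hb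
  · simp [ha, hb]
  · rw [max_eq_right ha, max_eq_left hb, min_eq_left ha, min_eq_right hb,
      abs_of_nonpos (sub_nonpos.2 (ha.trans hb))]
    simp [abs_of_nonneg hb, abs_of_nonpos ha]; abel
  · rw [max_eq_left ha, max_eq_right hb, min_eq_right ha, min_eq_left hb,
      abs_of_nonneg (sub_nonneg.2 (hb.trans ha))]
    simp [abs_of_nonneg ha, abs_of_nonpos hb]; abel
  · simp [ha, hb]

open Matrix

namespace l1

variable {n : ℕ}

theorem nonneg (x : Fin n → ℝ) : 0 ≤ l1 x :=
  sum_nonneg fun i _ => abs_nonneg (x i)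

theorem add_le (x y : Fin n → ℝ) : l1 (x + y) ≤ l1 x + l1 y := by
  simp only [l1, ← sum_add_distrib]
  exact sum_le_sum fun i _ => abs_add_le _ _

theorem smul (c : ℝ) (x : Fin n → ℝ) : l1 (c • x) = |c| * l1 x := by
  simp [l1, mul_sum, abs_mul]

theorem mulVec_le {F : Matrix (Fin n) (Fin n) ℝ} (hF : ColStochastic F) (x : Fin n → ℝ) :
    l1 (F *ᵥ x) ≤ l1 x :=
  calc ∑ i, |∑ j, F i j * x j| ≤ ∑ i, ∑ j, |F i j * x j| :=
        sum_le_sum fun i _ => abs_sum_le_sum_abs _ _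
    _ = ∑ j, (∑ i, F i j) * |x j| := by
        rw [sum_comm]
        simp only [sum_mul, abs_mul, abs_of_nonneg (hF.1 _ _)]
    _ = ∑ j, |x j| := by simp only [hF.2, one_mul]

theorem smul_mulVec_le {F : Matrix (Fin n) (Fin n) ℝ} (hF : ColStochastic F) (c : ℝ)
    (x : Fin n → ℝ) : l1 (c • F *ᵥ x) ≤ |c| * l1 x := by
  rw [smul]
  exact mul_le_mul_of_nonneg_left (mulVec_le hF x) (abs_nonneg c)

theorem Ppos_sub_add_Pneg_sub (a b : Fin n → ℝ) :
    l1 (Ppos a - Ppos b) + l1 (Pneg a - Pneg b) = l1 (a - b) := by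
  simp only [l1, ← sum_add_distrib, Pi.sub_apply, Ppos, Pneg,
    abs_max_zero_sub_add_abs_min_zero_sub]

end l1

theorem repRank_stability_inequality_general {n : ℕ} (F B : Matrix (Fin n) (Fin n) ℝ)
    (hF : ColStochastic F) (hB : ColStochastic B)
    (α₁ α₂ α₃ : ℝ) (hα₁ : 0 < α₁) (hα₂ : 0 < α₂)
    (hα₃ : 0 < α₃)
    (d₁ d₂ t₁ t₂ : Fin n → ℝ)
    (ht₁ : t₁ = α₁ • F.mulVec (Ppos t₁) + α₂ • B.mulVec (Pneg t₁) + α₃ • d₁)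
    (ht₂ : t₂ = α₁ • F.mulVec (Ppos t₂) + α₂ • B.mulVec (Pneg t₂) + α₃ • d₂) :
    l1 (t₁ - t₂) ≤ max α₁ α₂ * l1 (t₁ - t₂) + α₃ * l1 (d₁ - d₂) := by
  have hdiff : t₁ - t₂ = α₁ • F *ᵥ (Ppos t₁ - Ppos t₂) + α₂ • B *ᵥ (Pneg t₁ - Pneg t₂)
      + α₃ • (d₁ - d₂) := by
    rw [mulVec_sub, mulVec_sub]
    conv_lhs => rw [ht₁, ht₂]
    module
  calc l1 (t₁ - t₂)
      ≤ l1 (α₁ • F *ᵥ (Ppos t₁ - Ppos t₂)) + l1 (α₂ • B *ᵥ (Pneg t₁ - Pneg t₂))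
        + l1 (α₃ • (d₁ - d₂)) := by
        rw [hdiff]
        refine (l1.add_le _ _).trans ?_
        gcongr
        exact l1.add_le _ _
    _ ≤ α₁ * l1 (Ppos t₁ - Ppos t₂) + α₂ * l1 (Pneg t₁ - Pneg t₂) + α₃ * l1 (d₁ - d₂) := by
        rw [l1.smul α₃, abs_of_pos hα₃]
        gcongr
        · simpa only [abs_of_pos hα₁] using l1.smul_mulVec_le hF α₁ _
        · simpa only [abs_of_pos hα₂] using l1.smul_mulVec_le hB α₂ _
    _ ≤ max α₁ α₂ * (l1 (Ppos t₁ - Ppos t₂) + l1 (Pneg t₁ - Pneg t₂)) + α₃ * l1 (d₁ - d₂) := by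
        rw [mul_add]
        gcongr ?_ + _
        exact add_le_add (mul_le_mul_of_nonneg_right (le_max_left _ _) (l1.nonneg _))
          (mul_le_mul_of_nonneg_right (le_max_right _ _) (l1.nonneg _))
    _ = max α₁ α₂ * l1 (t₁ - t₂) + α₃ * l1 (d₁ - d₂) := by
        rw [l1.Ppos_sub_add_Pneg_sub]

theorem repRank_stability_inequality {n : ℕ} (F B : Matrix (Fin n) (Fin n) ℝ)
    (hF : ColStochastic F) (hB : ColStochastic B)
    (α₁ α₂ α₃ : ℝ) (hα₁ : 0 < α₁) (hα₁' : α₁ < 1) (hα₂ : 0 < α₂) (hα₂' : α₂ < 1)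
    (hα₃ : 0 < α₃) (hα₃' : α₃ < 1)
    (d₁ d₂ t₁ t₂ : Fin n → ℝ)
    (ht₁ : t₁ = α₁ • F.mulVec (Ppos t₁) + α₂ • B.mulVec (Pneg t₁) + α₃ • d₁)
    (ht₂ : t₂ = α₁ • F.mulVec (Ppos t₂) + α₂ • B.mulVec (Pneg t₂) + α₃ • d₂) :
    l1 (t₁ - t₂) ≤ max α₁ α₂ * l1 (t₁ - t₂) + α₃ * l1 (d₁ - d₂) :=
  repRank_stability_inequality_general F B hF hB α₁ α₂ α₃ hα₁ hα₂ hα₃ d₁ d₂ t₁ t₂ ht₁ ht₂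
end
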